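/- Let T(z) = (1−w) z + w z_in − h ∇f(z) where f(z) = ‖z − z₀‖²/(2σ²) + ‖Pz − y‖²/(2m²), P Pᵀ = I, and parameters w ∈ [0,1), h > 0, σ, m > 0 satisfy h(1/σ² + 1/m²) + w < 2. Then T is a contraction on ℝ^p with respect to the Euclidean norm. -/

import Mathlib

/-!
Writing `v = x - z`, the update map changes by `a • v - b • P†(P v)` with
`a = 1 - w - h/σ²` and `b = h/m²`. Since `P P† = id`, `P†P` is an orthogonal projection, so `v`
splits orthogonally as `P†P v + (v - P†P v)` and the difference is
`(a - b) • P†P v + a • (v - P†P v)`.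
Hence the Lipschitz constant is `max |a - b| |a|`, which is `< 1` by the step-size condition.
-/

open ContinuousLinearMap

section Projection

variable {E F : Type*} [NormedAddCommGroup E] [InnerProductSpace ℝ E]
  [NormedAddCommGroup F] [InnerProductSpace ℝ F]

theorem norm_smul_add_smul_le_of_inner_eq_zero {q r : E} (hqr : inner ℝ q r = 0) (α β : ℝ) :
    ‖α • q + β • r‖ ≤ max |α| |β| * ‖q + r‖ := by
  have hqr' : inner ℝ (α • q) (β • r) = 0 := by
    rw [real_inner_smul_left, real_inner_smul_right, hqr, mul_zero, mul_zero]
  have hα : α ^ 2 ≤ max |α| |β| ^ 2 := by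
    rw [← sq_abs α]; gcongr; exact le_max_left _ _
  have hβ : β ^ 2 ≤ max |α| |β| ^ 2 := by
    rw [← sq_abs β]; gcongr; exact le_max_right _ _
  refine le_of_sq_le_sq ?_ (by positivity)
  calc ‖α • q + β • r‖ ^ 2
    _ = ‖α • q‖ * ‖α • q‖ + ‖β • r‖ * ‖β • r‖ := by
        rw [sq, norm_add_sq_eq_norm_sq_add_norm_sq_real hqr']
    _ = α ^ 2 * ‖q‖ ^ 2 + β ^ 2 * ‖r‖ ^ 2 := by
        rw [norm_smul, norm_smul, Real.norm_eq_abs, Real.norm_eq_abs, ← sq_abs α, ← sq_abs β]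
        ring
    _ ≤ max |α| |β| ^ 2 * ‖q‖ ^ 2 + max |α| |β| ^ 2 * ‖r‖ ^ 2 := by gcongr
    _ = max |α| |β| ^ 2 * (‖q + r‖ * ‖q + r‖) := by
        rw [norm_add_sq_eq_norm_sq_add_norm_sq_real hqr]; ring
    _ = (max |α| |β| * ‖q + r‖) ^ 2 := by ring

variable [CompleteSpace E] [CompleteSpace F]

theorem inner_adjoint_apply_apply_sub_eq_zero {P : E →L[ℝ] F}
    (hP : P ∘L adjoint P = ContinuousLinearMap.id ℝ F) (v : E) :
    inner ℝ (adjoint P (P v)) (v - adjoint P (P v)) = 0 := by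
  have hPP : P (adjoint P (P v)) = P v := congr($hP (P v))
  rw [adjoint_inner_left, map_sub, hPP, sub_self, inner_zero_right]

theorem norm_smul_sub_smul_adjoint_apply_apply_le {P : E →L[ℝ] F}
    (hP : P ∘L adjoint P = ContinuousLinearMap.id ℝ F) (a b : ℝ) (v : E) :
    ‖a • v - b • adjoint P (P v)‖ ≤ max |a - b| |a| * ‖v‖ := by
  have h := norm_smul_add_smul_le_of_inner_eq_zero (inner_adjoint_apply_apply_sub_eq_zero hP v)
    (a - b) a
  rwa [add_sub_cancel, show (a - b) • adjoint P (P v) + a • (v - adjoint P (P v))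
    = a • v - b • adjoint P (P v) by module] at h

theorem lipschitzWith_smul_sub_smul_adjoint_apply_apply_add {P : E →L[ℝ] F}
    (hP : P ∘L adjoint P = ContinuousLinearMap.id ℝ F) (a b : ℝ) (c : E) :
    LipschitzWith (max |a - b| |a|).toNNReal (fun z => a • z - b • adjoint P (P z) + c) := by
  refine LipschitzWith.of_dist_le_mul fun x z => ?_
  rw [Real.coe_toNNReal _ (by positivity), dist_eq_norm, dist_eq_norm,
    show a • x - b • adjoint P (P x) + c - (a • z - b • adjoint P (P z) + c)
      = a • (x - z) - b • adjoint P (P (x - z)) by simp only [map_sub]; module]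
  exact norm_smul_sub_smul_adjoint_apply_apply_le hP a b (x - z)

end Projection

theorem stmt11_general {k p : ℕ}
    (P : EuclideanSpace ℝ (Fin p) →L[ℝ] EuclideanSpace ℝ (Fin k))
    (hP : P ∘L ContinuousLinearMap.adjoint P
        = ContinuousLinearMap.id ℝ (EuclideanSpace ℝ (Fin k)))
    (z₀ zin : EuclideanSpace ℝ (Fin p)) (y : EuclideanSpace ℝ (Fin k))
    (w h σ m : ℝ) (hw : w ∈ Set.Ico (0:ℝ) 1) (hh : 0 < h) (hσ : 0 < σ)
    (hcond : h * (1 / σ ^ 2 + 1 / m ^ 2) + w < 2) :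
    ∃ K : NNReal, K < 1 ∧
      LipschitzWith K
        (fun z : EuclideanSpace ℝ (Fin p) =>
          (1 - w) • z + w • zin
            - h • ((σ ^ 2)⁻¹ • (z - z₀)
              + (m ^ 2)⁻¹ • (ContinuousLinearMap.adjoint P) (P z - y))) := by
  set a := 1 - w - h * (σ ^ 2)⁻¹
  set b := h * (m ^ 2)⁻¹
  have hσ' : 0 < h * (σ ^ 2)⁻¹ := by positivity
  have hb : 0 ≤ b := by positivity
  have hcond' : h * (σ ^ 2)⁻¹ + b + w < 2 := by simpa only [one_div, mul_add] using hcond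
  have hK : max |a - b| |a| < 1 :=
    max_lt (abs_lt.2 ⟨by linarith, by linarith [hw.1]⟩)
      (abs_lt.2 ⟨by linarith, by linarith [hw.1]⟩)
  refine ⟨_, Real.toNNReal_lt_one.2 hK, ?_⟩
  convert lipschitzWith_smul_sub_smul_adjoint_apply_apply_add hP a b
    (w • zin + (h * (σ ^ 2)⁻¹) • z₀ + b • adjoint P y) using 1
  -- the metric structures of `PiLp` and of the inner product space agree only up to unfolding
  · rfl
  · rfl
  funext z
  simp only [a, b, map_sub]
  module

/-- The update map T(z) = (1−w)z + w z_in − h∇f(z), with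
f(z) = ‖z−z₀‖²/(2σ²) + ‖Pz−y‖²/(2m²) and P Pᵀ = I, is a contraction on ℝᵖ when
h(1/σ² + 1/m²) + w < 2. -/
theorem stmt11 {k p : ℕ}
    (P : EuclideanSpace ℝ (Fin p) →L[ℝ] EuclideanSpace ℝ (Fin k))
    (hP : P ∘L ContinuousLinearMap.adjoint P
        = ContinuousLinearMap.id ℝ (EuclideanSpace ℝ (Fin k)))
    (z₀ zin : EuclideanSpace ℝ (Fin p)) (y : EuclideanSpace ℝ (Fin k))
    (w h σ m : ℝ) (hw : w ∈ Set.Ico (0:ℝ) 1) (hh : 0 < h) (hσ : 0 < σ)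
    (hm : 0 < m) (hcond : h * (1 / σ ^ 2 + 1 / m ^ 2) + w < 2) :
    ∃ K : NNReal, K < 1 ∧
      LipschitzWith K
        (fun z : EuclideanSpace ℝ (Fin p) =>
          (1 - w) • z + w • zin
            - h • ((σ ^ 2)⁻¹ • (z - z₀)
              + (m ^ 2)⁻¹ • (ContinuousLinearMap.adjoint P) (P z - y))) :=
  stmt11_general P hP z₀ zin y w h σ m hw hh hσ hcond
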